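/- For every r ≥ 0 and every complex w ∈ ℂ, the series Σ_{ℓ=0}^∞ i^ℓ (2ℓ+1) j_ℓ(r) P_ℓ(w) converges absolutely and equals e^{i r w}, where j_ℓ is the spherical Bessel function and P_ℓ the Legendre polynomial extended to complex argument. -/

import Mathlib

open Finset Complex

/-- The spherical Bessel function of the first kind `j_ℓ`, via its power series
`j_ℓ(x) = 2^ℓ ∑_{k} (-1)^k (ℓ+k)! / (k! (2ℓ+2k+1)!) x^{2k+ℓ}` (so `j_ℓ(0) = δ_{ℓ,0}`). -/
noncomputable def sphericalBessel (ℓ : ℕ) (x : ℝ) : ℝ :=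
  2 ^ ℓ * ∑' k : ℕ, (-1 : ℝ) ^ k * (Nat.factorial (ℓ + k) : ℝ) /
    ((Nat.factorial k : ℝ) * (Nat.factorial (2 * ℓ + 2 * k + 1) : ℝ)) * x ^ (2 * k + ℓ)

/-- The Legendre polynomial of degree `ℓ` for complex argument. -/
noncomputable def legendrePC (ℓ : ℕ) (w : ℂ) : ℂ :=
  (2 : ℂ)⁻¹ ^ ℓ * ∑ k ∈ range (ℓ + 1),
    (Nat.choose ℓ k : ℂ) ^ 2 * (w - 1) ^ (ℓ - k) * (w + 1) ^ k

/-!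
Both sides are rearrangements of one absolutely convergent double series. Expanding `j_ℓ` in its
power series, the `k`-th term of `i^ℓ (2ℓ+1) j_ℓ(r) P_ℓ(w)` is `(ir)^n / n! · c_{n,ℓ} P_ℓ(w)`
with `n = ℓ + 2k`, where `c_{n,ℓ}` are the coefficients of `w^n = ∑_ℓ c_{n,ℓ} P_ℓ(w)`; these are
computed from Bonnet's recurrence, and `c_{n,ℓ} = 0` unless `n - ℓ` is even and nonnegative.
Summing over `ℓ` first for fixed `n` therefore gives `(irw)^n / n!`, whose sum is `e^{irw}`.
Absolute convergence follows from `|P_ℓ(w)| ≤ (2 max(|w-1|, |w+1|))^ℓ` and the factorial decay of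
the coefficients of `j_ℓ`.
-/

open scoped Nat

def shiftSeq {M : Type*} [Zero M] (f : ℕ → M) : ℕ → M
  | 0 => 0
  | k + 1 => f k

@[simp] lemma shiftSeq_zero {M : Type*} [Zero M] (f : ℕ → M) : shiftSeq f 0 = 0 := rfl
@[simp] lemma shiftSeq_succ {M : Type*} [Zero M] (f : ℕ → M) (k : ℕ) : shiftSeq f (k + 1) = f k :=
  rfl

section BinaryForm

variable {R : Type*} [CommSemiring R]

def binaryForm (f : ℕ → R) (n : ℕ) (s t : R) : R :=
  ∑ k ∈ range (n + 1), f k * s ^ (n - k) * t ^ k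

lemma mul_binaryForm_of_eq_zero {f : ℕ → R} {n : ℕ} (hf : f (n + 1) = 0) (s t : R) :
    s * binaryForm f n s t = binaryForm f (n + 1) s t := by
  rw [binaryForm, binaryForm, sum_range_succ _ (n + 1), hf, zero_mul, zero_mul, add_zero, mul_sum]
  refine sum_congr rfl fun k hk => ?_
  rw [Nat.sub_add_comm (mem_range_succ_iff.mp hk), pow_succ]
  ring

lemma mul_binaryForm_shiftSeq (f : ℕ → R) (n : ℕ) (s t : R) :
    t * binaryForm f n s t = binaryForm (shiftSeq f) (n + 1) s t := by
  rw [binaryForm, binaryForm, sum_range_succ' _ (n + 1), shiftSeq_zero, zero_mul, zero_mul,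
    add_zero, mul_sum]
  refine sum_congr rfl fun k _ => ?_
  rw [shiftSeq_succ, Nat.add_sub_add_right, pow_succ]
  ring

end BinaryForm

lemma Nat.cast_choose_succ_mul {R : Type*} [Ring R] (n k : ℕ) :
    (n.choose (k + 1) : R) * (k + 1) = n.choose k * (n - k) := by
  rcases le_or_gt k n with h | h
  · rw [← Nat.cast_sub h]
    exact_mod_cast congrArg (Nat.cast : ℕ → R) (Nat.choose_succ_right_eq n k)
  · simp [Nat.choose_eq_zero_of_lt h, Nat.choose_eq_zero_of_lt (by omega : n < k + 1)]

lemma Nat.mul_choose_succ_sq (n k : ℕ) :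
    n * n.choose (k + 1) ^ 2 = n.choose k * n.choose (k + 1) + n.choose (k + 1) * n.choose (k + 2)
      + (n + 2) * n.choose k * n.choose (k + 2) := by
  have h1 := Nat.cast_choose_succ_mul (R := ℚ) n k
  have h2 := Nat.cast_choose_succ_mul (R := ℚ) n (k + 1)
  qify
  rw [eq_div_of_mul_eq (by positivity) h2, eq_div_of_mul_eq (by positivity) h1]
  push_cast
  field_simp
  ring

section LegendreForm

variable {R : Type*} [CommRing R]

def legendreForm (n : ℕ) (s t : R) : R :=
  binaryForm (fun k => (n.choose k : R) ^ 2) n s t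

/-- The coefficient of `s ^ (L + 2 - k) * t ^ k` in `legendreForm_recurrence`. -/
lemma choose_sq_recurrence (L k : ℕ) :
    (2 * L + 3 : R) * ((L + 1).choose k ^ 2 + shiftSeq (fun j => ((L + 1).choose j : R) ^ 2) k)
      = (L + 2) * (L + 2).choose k ^ 2 + (L + 1) * ((L.choose k : R) ^ 2
        - 2 * shiftSeq (fun j => (L.choose j : R) ^ 2) k
        + shiftSeq (shiftSeq (fun j => (L.choose j : R) ^ 2)) k) := by
  match k with
  | 0 => simp; ring
  | 1 => simp; ring
  | K + 2 =>
    simp only [shiftSeq_succ, Nat.choose_succ_succ' (L + 1), Nat.choose_succ_succ' L]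
    have key := congrArg (Nat.cast : ℕ → R) (Nat.mul_choose_succ_sq L K)
    push_cast at key ⊢
    linear_combination (2 : R) * key

theorem legendreForm_recurrence (L : ℕ) (s t : R) :
    (2 * L + 3 : R) * (s + t) * legendreForm (L + 1) s t
      = (L + 2) * legendreForm (L + 2) s t + (L + 1) * (t - s) ^ 2 * legendreForm L s t := by
  set c₀ : ℕ → R := fun j => (L.choose j : R) ^ 2
  set c₁ : ℕ → R := fun j => ((L + 1).choose j : R) ^ 2
  have hc₀ (n : ℕ) (hn : L < n) : c₀ n = 0 := by simp [c₀, Nat.choose_eq_zero_of_lt hn]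
  have hc₁ : c₁ (L + 2) = 0 := by simp [c₁]
  have hL : (s + t) * legendreForm (L + 1) s t
      = binaryForm c₁ (L + 2) s t + binaryForm (shiftSeq c₁) (L + 2) s t := by
    rw [add_mul, legendreForm, mul_binaryForm_of_eq_zero hc₁, mul_binaryForm_shiftSeq]
  have hR : (t - s) ^ 2 * legendreForm L s t = binaryForm c₀ (L + 2) s t
      - 2 * binaryForm (shiftSeq c₀) (L + 2) s t
      + binaryForm (shiftSeq (shiftSeq c₀)) (L + 2) s t := by
    calc _ = s * (s * binaryForm c₀ L s t) - 2 * (s * (t * binaryForm c₀ L s t))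
          + t * (t * binaryForm c₀ L s t) := by rw [legendreForm]; ring
      _ = _ := by
        rw [mul_binaryForm_of_eq_zero (hc₀ _ L.lt_succ_self),
          mul_binaryForm_of_eq_zero (hc₀ _ (by omega)), mul_binaryForm_shiftSeq,
          mul_binaryForm_of_eq_zero (f := shiftSeq c₀) (hc₀ _ (by omega)),
          mul_binaryForm_shiftSeq]
  rw [mul_assoc _ (s + t), hL, mul_assoc _ ((t - s) ^ 2), hR, legendreForm]
  simp only [binaryForm, mul_sum, ← sum_add_distrib, ← sum_sub_distrib]
  refine sum_congr rfl fun k _ => ?_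
  linear_combination (s ^ (L + 2 - k) * t ^ k) * choose_sq_recurrence (R := R) L k

end LegendreForm

lemma legendrePC_eq_legendreForm (ℓ : ℕ) (w : ℂ) :
    legendrePC ℓ w = 2⁻¹ ^ ℓ * legendreForm ℓ (w - 1) (w + 1) := rfl

@[simp] lemma legendrePC_zero (w : ℂ) : legendrePC 0 w = 1 := by simp [legendrePC]

@[simp] lemma legendrePC_one (w : ℂ) : legendrePC 1 w = w := by
  simp [legendrePC, sum_range_succ]
  ring

theorem legendrePC_recurrence (ℓ : ℕ) (w : ℂ) :
    (2 * ℓ + 1) * w * legendrePC ℓ w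
      = (ℓ + 1) * legendrePC (ℓ + 1) w + ℓ * legendrePC (ℓ - 1) w := by
  rcases ℓ with _ | L
  · simp
  have h := legendreForm_recurrence L (w - 1) (w + 1)
  rw [show w - 1 + (w + 1) = 2 * w by ring, show w + 1 - (w - 1) = 2 by ring] at h
  simp only [legendrePC_eq_legendreForm, Nat.add_sub_cancel]
  push_cast
  linear_combination (2⁻¹ : ℂ) ^ (L + 2) * h

lemma norm_legendrePC_le (ℓ : ℕ) (w : ℂ) :
    ‖legendrePC ℓ w‖ ≤ (2 * max ‖w - 1‖ ‖w + 1‖) ^ ℓ := by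
  set M := max ‖w - 1‖ ‖w + 1‖
  have hterm (k : ℕ) (hk : k ∈ range (ℓ + 1)) :
      ‖(ℓ.choose k : ℂ) ^ 2 * (w - 1) ^ (ℓ - k) * (w + 1) ^ k‖ ≤ ℓ.choose k ^ 2 * M ^ ℓ := by
    rw [← Nat.sub_add_cancel (mem_range_succ_iff.mp hk), pow_add M, Nat.add_sub_cancel]
    simp only [norm_mul, norm_pow, Complex.norm_natCast, mul_assoc]
    gcongr
    exacts [le_max_left _ _, le_max_right _ _]
  calc ‖legendrePC ℓ w‖
      ≤ 2⁻¹ ^ ℓ * ∑ k ∈ range (ℓ + 1), (ℓ.choose k : ℝ) ^ 2 * M ^ ℓ := by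
        rw [legendrePC, norm_mul, norm_pow, norm_inv, Complex.norm_ofNat]
        gcongr
        exact (norm_sum_le _ _).trans (sum_le_sum hterm)
    _ = 2⁻¹ ^ ℓ * (2 * ℓ).choose ℓ * M ^ ℓ := by
        rw [← sum_mul, mul_assoc, ← Nat.sum_range_choose_sq]
        push_cast
        rfl
    _ ≤ 2⁻¹ ^ ℓ * 4 ^ ℓ * M ^ ℓ := by
        gcongr
        exact_mod_cast Nat.centralBinom_eq_two_mul_choose ℓ ▸ Nat.centralBinom_le_four_pow ℓ
    _ = (2 * M) ^ ℓ := by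
        rw [mul_pow, ← mul_pow]
        norm_num

noncomputable def sphericalBesselCoeff (ℓ k : ℕ) : ℝ :=
  2 ^ ℓ * (ℓ + 2 * k)! * (ℓ + k)! / (k ! * (2 * ℓ + 2 * k + 1)!)

noncomputable def sphericalBesselTerm (ℓ : ℕ) (x : ℝ) (k : ℕ) : ℝ :=
  (-1) ^ k * sphericalBesselCoeff ℓ k * x ^ (ℓ + 2 * k) / (ℓ + 2 * k)!

lemma sphericalBesselTerm_eq_two_pow_mul (ℓ : ℕ) (x : ℝ) (k : ℕ) :
    sphericalBesselTerm ℓ x k = 2 ^ ℓ * ((-1) ^ k * (ℓ + k)! / (k ! * (2 * ℓ + 2 * k + 1)!)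
      * x ^ (2 * k + ℓ)) := by
  rw [sphericalBesselTerm, sphericalBesselCoeff, add_comm (2 * k)]
  field_simp

lemma Nat.factorial_add_mul_factorial_le (ℓ k : ℕ) : (ℓ + k)! * ℓ ! ≤ (2 * ℓ + 2 * k + 1)! :=
  calc (ℓ + k)! * ℓ ! ≤ (ℓ + k)! * (ℓ + k)! :=
        Nat.mul_le_mul_left _ (Nat.factorial_le (by omega))
    _ ≤ (ℓ + k + (ℓ + k))! := Nat.le_of_dvd (Nat.factorial_pos _)
        (Nat.factorial_mul_factorial_dvd_factorial_add _ _)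
    _ ≤ (2 * ℓ + 2 * k + 1)! := Nat.factorial_le (by omega)

lemma abs_sphericalBesselTerm_le (ℓ : ℕ) (x : ℝ) (k : ℕ) :
    |sphericalBesselTerm ℓ x k| ≤ 2 ^ ℓ * (|x| ^ ℓ / ℓ !) * ((x ^ 2) ^ k / k !) := by
  have hfact : ((ℓ + k)! : ℝ) / (2 * ℓ + 2 * k + 1)! ≤ 1 / ℓ ! := by
    rw [div_le_div_iff₀ (by positivity) (by positivity), one_mul]
    exact_mod_cast Nat.factorial_add_mul_factorial_le ℓ k
  simp only [sphericalBesselTerm_eq_two_pow_mul, abs_mul, abs_div, abs_pow, abs_neg, abs_one,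
    one_pow, one_mul, Nat.abs_cast, abs_two]
  calc _ = 2 ^ ℓ * ((ℓ + k)! / (2 * ℓ + 2 * k + 1)! * |x| ^ ℓ * ((x ^ 2) ^ k / k !)) := by
        rw [← pow_mul, ← (even_two_mul k).pow_abs, pow_add]
        field_simp
    _ ≤ 2 ^ ℓ * (1 / ℓ ! * |x| ^ ℓ * ((x ^ 2) ^ k / k !)) := by gcongr
    _ = _ := by ring

lemma hasSum_sphericalBesselTerm (ℓ : ℕ) (x : ℝ) :
    HasSum (sphericalBesselTerm ℓ x) (sphericalBessel ℓ x) := by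
  have hsum : Summable (sphericalBesselTerm ℓ x) :=
    .of_norm_bounded (((Real.summable_pow_div_factorial (x ^ 2)).mul_left _))
      (abs_sphericalBesselTerm_le ℓ x)
  convert hsum.hasSum using 1
  simp only [sphericalBessel, sphericalBesselTerm_eq_two_pow_mul, tsum_mul_left]

lemma sphericalBesselCoeff_succ_left (ℓ k : ℕ) :
    (2 * ℓ + 2 * k + 3) * sphericalBesselCoeff (ℓ + 1) k
      = (ℓ + 2 * k + 1) * sphericalBesselCoeff ℓ k := by
  rw [sphericalBesselCoeff, sphericalBesselCoeff, show ℓ + 1 + 2 * k = ℓ + 2 * k + 1 by ring,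
    show ℓ + 1 + k = ℓ + k + 1 by ring,
    show 2 * (ℓ + 1) + 2 * k + 1 = 2 * ℓ + 2 * k + 1 + 1 + 1 by ring,
    Nat.factorial_succ (ℓ + 2 * k), Nat.factorial_succ (ℓ + k),
    Nat.factorial_succ (2 * ℓ + 2 * k + 1 + 1), Nat.factorial_succ (2 * ℓ + 2 * k + 1)]
  push_cast
  field_simp
  ring

lemma sphericalBesselCoeff_succ_right (ℓ k : ℕ) :
    (2 * k + 2) * sphericalBesselCoeff ℓ (k + 1)
      = (ℓ + 2 * k + 2) * sphericalBesselCoeff (ℓ + 1) k := by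
  rw [sphericalBesselCoeff, sphericalBesselCoeff,
    show ℓ + 2 * (k + 1) = ℓ + 1 + 2 * k + 1 by ring, show ℓ + (k + 1) = ℓ + 1 + k by ring,
    show 2 * ℓ + 2 * (k + 1) + 1 = 2 * (ℓ + 1) + 2 * k + 1 by ring,
    Nat.factorial_succ (ℓ + 1 + 2 * k), Nat.factorial_succ k]
  push_cast
  field_simp
  ring

/-- `w ^ n = ∑ ℓ, powLegendreCoeff n ℓ * P_ℓ(w)`: the recursion is the three-term recurrence
`w P_ℓ = ((ℓ + 1) P_{ℓ+1} + ℓ P_{ℓ-1}) / (2ℓ + 1)` read off on coefficients. -/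
noncomputable def powLegendreCoeff : ℕ → ℕ → ℝ
  | 0, ℓ => if ℓ = 0 then 1 else 0
  | n + 1, ℓ => ℓ / (2 * ℓ - 1) * powLegendreCoeff n (ℓ - 1)
      + (ℓ + 1) / (2 * ℓ + 3) * powLegendreCoeff n (ℓ + 1)

lemma powLegendreCoeff_eq_zero_of_lt {n ℓ : ℕ} (h : n < ℓ) : powLegendreCoeff n ℓ = 0 := by
  induction n generalizing ℓ with
  | zero => simp [powLegendreCoeff, Nat.pos_iff_ne_zero.mp h]
  | succ n ih => simp [powLegendreCoeff, ih (by omega : n < ℓ - 1), ih (by omega : n < ℓ + 1)]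

lemma powLegendreCoeff_eq_zero_of_odd {n ℓ : ℕ} (h : Odd (n + ℓ)) :
    powLegendreCoeff n ℓ = 0 := by
  induction n generalizing ℓ with
  | zero => simp [powLegendreCoeff, show ℓ ≠ 0 by rintro rfl; simp at h]
  | succ n ih =>
    have hsucc : powLegendreCoeff n (ℓ + 1) = 0 := ih (by convert h using 1; omega)
    rcases ℓ with _ | ℓ
    · simp [powLegendreCoeff, hsucc]
    · have hpred : powLegendreCoeff n ℓ = 0 :=
        ih (by obtain ⟨m, hm⟩ := h; exact ⟨m - 1, by omega⟩)
      simp [powLegendreCoeff, hsucc, hpred]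

theorem pow_eq_sum_powLegendreCoeff_mul_legendrePC (n : ℕ) (w : ℂ) :
    w ^ n = ∑ ℓ ∈ range (n + 1), (powLegendreCoeff n ℓ : ℂ) * legendrePC ℓ w := by
  induction n with
  | zero => simp [powLegendreCoeff]
  | succ n ih =>
    have hmul (ℓ : ℕ) : w * legendrePC ℓ w = (ℓ + 1) / (2 * ℓ + 1) * legendrePC (ℓ + 1) w
        + ℓ / (2 * ℓ + 1) * legendrePC (ℓ - 1) w := by
      have h2ℓ : (2 * ℓ + 1 : ℂ) ≠ 0 := by exact_mod_cast (2 * ℓ).succ_ne_zero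
      rw [div_mul_eq_mul_div, div_mul_eq_mul_div, ← add_div, eq_div_iff h2ℓ]
      linear_combination legendrePC_recurrence ℓ w
    have hD (j : ℕ) := powLegendreCoeff_eq_zero_of_lt (n := n) (ℓ := n + 1 + j) (by omega)
    calc w ^ (n + 1)
        = ∑ ℓ ∈ range (n + 2), (powLegendreCoeff n ℓ : ℂ) * (w * legendrePC ℓ w) := by
          rw [sum_range_succ, hD 0, Complex.ofReal_zero, zero_mul, add_zero, pow_succ', ih, mul_sum]
          exact sum_congr rfl fun _ _ => by ring
      _ = ∑ ℓ ∈ range (n + 2), ((ℓ / (2 * ℓ - 1) * powLegendreCoeff n (ℓ - 1)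
            + (ℓ + 1) / (2 * ℓ + 3) * powLegendreCoeff n (ℓ + 1) : ℝ) : ℂ) * legendrePC ℓ w := by
          push_cast
          simp only [hmul, mul_add, add_mul, sum_add_distrib]
          congr 1
          · rw [sum_range_succ, hD 0, sum_range_succ' _ (n + 1)]
            simp only [Complex.ofReal_zero, zero_mul, add_zero, CharP.cast_eq_zero, zero_div,
              Nat.add_sub_cancel]
            exact sum_congr rfl fun ℓ _ => by push_cast; ring_nf
          · rw [sum_range_succ' _ (n + 1), sum_range_succ _ (n + 1), hD 1]
            simp only [Complex.ofReal_zero, zero_mul, mul_zero, add_zero, CharP.cast_eq_zero,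
              zero_div, Nat.add_sub_cancel]
            exact sum_congr rfl fun ℓ _ => by push_cast; ring_nf

lemma powLegendreCoeff_succ (n ℓ : ℕ) :
    (2 * ℓ - 1) * (2 * ℓ + 3) * powLegendreCoeff (n + 1) ℓ
      = ℓ * (2 * ℓ + 3) * powLegendreCoeff n (ℓ - 1)
        + (ℓ + 1) * (2 * ℓ - 1) * powLegendreCoeff n (ℓ + 1) := by
  have h₁ : (2 * ℓ - 1 : ℝ) ≠ 0 := by
    rw [sub_ne_zero]
    exact_mod_cast (Nat.two_mul_ne_two_mul_add_one (n := ℓ) (m := 0))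
  rw [powLegendreCoeff]
  field_simp

theorem powLegendreCoeff_add_two_mul (ℓ k : ℕ) :
    powLegendreCoeff (ℓ + 2 * k) ℓ = (2 * ℓ + 1) * sphericalBesselCoeff ℓ k := by
  induction k generalizing ℓ with
  | zero =>
    induction ℓ with
    | zero => simp [powLegendreCoeff, sphericalBesselCoeff]
    | succ m ih =>
      simp only [mul_zero, add_zero] at ih ⊢
      have hrec := powLegendreCoeff_succ m (m + 1)
      rw [Nat.add_sub_cancel, ih,
        powLegendreCoeff_eq_zero_of_lt (n := m) (ℓ := m + 1 + 1) (by omega)] at hrec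
      have hratio := sphericalBesselCoeff_succ_left m 0
      push_cast at hrec hratio ⊢
      have hab : (2 * ((m : ℝ) + 1) - 1) * (2 * (m + 1) + 3) ≠ 0 := by
        rw [show 2 * ((m : ℝ) + 1) - 1 = 2 * m + 1 by ring]
        positivity
      apply mul_left_cancel₀ hab
      linear_combination hrec - (2 * m + 1) * (2 * m + 5) * hratio
  | succ k ihk =>
    induction ℓ with
    | zero =>
      have hrec := powLegendreCoeff_succ (1 + 2 * k) 0
      rw [ihk] at hrec
      have hratio := sphericalBesselCoeff_succ_right 0 k
      rw [show 0 + 2 * (k + 1) = 1 + 2 * k + 1 by ring]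
      push_cast at hrec hratio ⊢
      have hk : (2 * k + 2 : ℝ) ≠ 0 := by positivity
      apply mul_left_cancel₀ hk
      linear_combination (-(2 * k + 2) / 3 : ℝ) * hrec - hratio
    | succ m ih =>
      have hrec := powLegendreCoeff_succ (m + 2 * (k + 1)) (m + 1)
      rw [Nat.add_sub_cancel, ih, show m + 2 * (k + 1) = m + 2 + 2 * k by ring, ihk] at hrec
      have h₁ := sphericalBesselCoeff_succ_right m k
      have h₂ := sphericalBesselCoeff_succ_right (m + 1) k
      have h₃ := sphericalBesselCoeff_succ_left (m + 1) k
      rw [show m + 1 + 2 * (k + 1) = m + 2 + 2 * k + 1 by ring]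
      push_cast at hrec h₁ h₂ h₃ ⊢
      have hab : (2 * ((m : ℝ) + 1) - 1) * (2 * (m + 1) + 3) * (2 * k + 2) ≠ 0 := by
        rw [show 2 * ((m : ℝ) + 1) - 1 = 2 * m + 1 by ring]
        positivity
      apply mul_left_cancel₀ hab
      linear_combination (2 * k + 2) * hrec
        + (2 * m + 1) * (2 * m + 5) * ((m + 1) * h₁ - (2 * m + 3) * h₂ - (m + 1) * h₃)

def legendreReindex (p : ℕ × ℕ) : ℕ × ℕ := (p.1 + 2 * p.2, p.1)

lemma legendreReindex_injective : Function.Injective legendreReindex := by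
  rintro ⟨ℓ, k⟩ ⟨ℓ', k'⟩ h
  simp only [legendreReindex, Prod.mk.injEq] at h
  ext <;> omega

noncomputable def expLegendreTerm (x w : ℂ) (q : ℕ × ℕ) : ℂ :=
  x ^ q.1 / q.1 ! * powLegendreCoeff q.1 q.2 * legendrePC q.2 w

lemma expLegendreTerm_eq_zero_of_notMem_range {x w : ℂ} {q : ℕ × ℕ}
    (hq : q ∉ Set.range legendreReindex) : expLegendreTerm x w q = 0 := by
  obtain ⟨n, ℓ⟩ := q
  suffices powLegendreCoeff n ℓ = 0 by simp [expLegendreTerm, this]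
  rcases lt_or_ge n ℓ with h | h
  · exact powLegendreCoeff_eq_zero_of_lt h
  · apply powLegendreCoeff_eq_zero_of_odd
    obtain ⟨k, hk⟩ | ⟨k, hk⟩ := Nat.even_or_odd (n - ℓ)
    · exact absurd ⟨(ℓ, k), Prod.ext (by dsimp [legendreReindex]; omega) rfl⟩ hq
    · exact ⟨k + ℓ, by omega⟩

lemma hasSum_expLegendreTerm_fiber (x w : ℂ) (n : ℕ) :
    HasSum (fun ℓ => expLegendreTerm x w (n, ℓ)) ((x * w) ^ n / n !) := by
  have hzero (ℓ : ℕ) (hℓ : ℓ ∉ range (n + 1)) : expLegendreTerm x w (n, ℓ) = 0 := by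
    simp [expLegendreTerm, powLegendreCoeff_eq_zero_of_lt (by simpa using hℓ : n < ℓ)]
  have hsum : (x * w) ^ n / n ! = ∑ ℓ ∈ range (n + 1), expLegendreTerm x w (n, ℓ) := by
    simp only [expLegendreTerm, mul_assoc, ← mul_sum, mul_pow,
      pow_eq_sum_powLegendreCoeff_mul_legendrePC n w]
    ring
  exact hsum ▸ hasSum_sum_of_ne_finset_zero hzero

lemma hasSum_expLegendreTerm {x w : ℂ} (h : Summable (expLegendreTerm x w)) :
    HasSum (expLegendreTerm x w) (exp (x * w)) := by
  have hexp := NormedSpace.expSeries_div_hasSum_exp (x * w)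
  rw [← Complex.exp_eq_exp_ℂ] at hexp
  exact (h.hasSum.prod_fiberwise (hasSum_expLegendreTerm_fiber x w)).unique hexp ▸ h.hasSum

lemma expLegendreTerm_legendreReindex (x : ℝ) (w : ℂ) (ℓ k : ℕ) :
    expLegendreTerm (I * x) w (legendreReindex (ℓ, k))
      = I ^ ℓ * (2 * ℓ + 1) * sphericalBesselTerm ℓ x k * legendrePC ℓ w := by
  simp only [expLegendreTerm, legendreReindex, powLegendreCoeff_add_two_mul, sphericalBesselTerm]
  rw [mul_pow, pow_add I, pow_mul, I_sq]
  push_cast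
  ring

lemma norm_expLegendreTerm_legendreReindex_le (x : ℝ) (w : ℂ) (ℓ k : ℕ) :
    ‖expLegendreTerm (I * x) w (legendreReindex (ℓ, k))‖
      ≤ (12 * max ‖w - 1‖ ‖w + 1‖ * |x|) ^ ℓ / ℓ ! * ((x ^ 2) ^ k / k !) := by
  have h3 : (2 * ℓ + 1 : ℝ) ≤ 3 ^ ℓ := by
    have := one_add_mul_le_pow (a := (2 : ℝ)) (by norm_num) ℓ
    norm_num at this
    linarith
  rw [expLegendreTerm_legendreReindex, norm_mul, norm_mul, norm_mul, norm_pow, Complex.norm_I,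
    one_pow, one_mul, Complex.norm_real, Real.norm_eq_abs,
    show (2 * ℓ + 1 : ℂ) = ((2 * ℓ + 1 : ℝ) : ℂ) by push_cast; ring, Complex.norm_real,
    Real.norm_of_nonneg (by positivity)]
  calc _ ≤ 3 ^ ℓ * (2 ^ ℓ * (|x| ^ ℓ / ℓ !) * ((x ^ 2) ^ k / k !))
        * (2 * max ‖w - 1‖ ‖w + 1‖) ^ ℓ := by
        gcongr
        exacts [abs_sphericalBesselTerm_le ℓ x k, norm_legendrePC_le ℓ w]
    _ = _ := by
        rw [show (12 : ℝ) = 3 * 2 * 2 by norm_num]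
        simp only [mul_pow]
        ring

lemma summable_norm_of_hasSum_fiberwise {β γ E : Type*} [NormedAddCommGroup E] {f : β × γ → E}
    {g : β → E} (hf : Summable (‖f ·‖)) (hg : ∀ b, HasSum (fun c => f (b, c)) (g b)) :
    Summable (‖g ·‖) :=
  .of_nonneg_of_le (fun _ => norm_nonneg _)
    (fun b => (hg b).norm_le_of_bounded (hf.prod_factor b).hasSum fun _ => le_rfl)
    ((summable_prod_of_nonneg fun _ => norm_nonneg _).mp hf).2

theorem jacobi_anger_complex_general (r : ℝ) (w : ℂ) :
    Summable (fun ℓ : ℕ =>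
      ‖(I ^ ℓ * (2 * (ℓ : ℂ) + 1) * ((sphericalBessel ℓ r : ℝ) : ℂ) * legendrePC ℓ w)‖) ∧
    HasSum (fun ℓ : ℕ =>
      I ^ ℓ * (2 * (ℓ : ℂ) + 1) * ((sphericalBessel ℓ r : ℝ) : ℂ) * legendrePC ℓ w)
      (Complex.exp (I * (r : ℂ) * w)) := by
  set f : ℕ × ℕ → ℂ := expLegendreTerm (I * r) w ∘ legendreReindex
  have hf : Summable (‖f ·‖) :=
    .of_nonneg_of_le (fun _ => norm_nonneg _)
      (fun p => norm_expLegendreTerm_legendreReindex_le r w p.1 p.2)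
      ((Real.summable_pow_div_factorial _).mul_of_nonneg (Real.summable_pow_div_factorial _)
        (fun _ => by positivity) (fun _ => by positivity))
  have hrow (ℓ : ℕ) : HasSum (fun k => f (ℓ, k))
      (I ^ ℓ * (2 * ℓ + 1) * (sphericalBessel ℓ r : ℂ) * legendrePC ℓ w) := by
    simp only [f, Function.comp_apply, expLegendreTerm_legendreReindex]
    exact ((hasSum_ofReal.mpr (hasSum_sphericalBesselTerm ℓ r)).mul_left _).mul_right _
  have hvanish (q : ℕ × ℕ) (hq : q ∉ Set.range legendreReindex) :
      expLegendreTerm (I * r) w q = 0 :=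
    expLegendreTerm_eq_zero_of_notMem_range hq
  have hsum : HasSum f (exp (I * r * w)) :=
    (legendreReindex_injective.hasSum_iff hvanish).mpr <| hasSum_expLegendreTerm <|
      (legendreReindex_injective.summable_iff hvanish).mp hf.of_norm
  exact ⟨summable_norm_of_hasSum_fiberwise hf hrow, hsum.prod_fiberwise hrow⟩

/-- Generalized Jacobi–Anger / plane-wave expansion with complex argument:
`e^{irw} = ∑_ℓ i^ℓ (2ℓ+1) j_ℓ(r) P_ℓ(w)`, with absolute convergence. -/
theorem jacobi_anger_complex (r : ℝ) (hr : 0 ≤ r) (w : ℂ) :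
    Summable (fun ℓ : ℕ =>
      ‖(I ^ ℓ * (2 * (ℓ : ℂ) + 1) * ((sphericalBessel ℓ r : ℝ) : ℂ) * legendrePC ℓ w)‖) ∧
    HasSum (fun ℓ : ℕ =>
      I ^ ℓ * (2 * (ℓ : ℂ) + 1) * ((sphericalBessel ℓ r : ℝ) : ℂ) * legendrePC ℓ w)
      (Complex.exp (I * (r : ℂ) * w)) :=
  jacobi_anger_complex_general r w
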